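/- Let a, b ∈ ℝ³ with a ≠ b, a ≠ −b, and ‖a+b‖ + ‖a−b‖ = 2. For i, j ∈ {0,1} set n_{ij} := (1/2)((−1)^{i+1} a + (−1)^{j+1} b) (all nonzero). Then G defined by G(i,j) := ‖n_{ij}‖ · (1/2)(I + (n_{ij}/‖n_{ij}‖)·σ) is a joint observable of the simple qubit observables E^{1,a} and E^{1,b}, and it is their unique joint observable. -/

import Mathlib

open Matrix
open scoped ComplexOrder

noncomputable section

/-- 2×2 complex matrices. -/
abbrev Mat2 := Matrix (Fin 2) (Fin 2) ℂ

/-- The Pauli matrix σ₁. -/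
def sigma1 : Mat2 := !![0, 1; 1, 0]
/-- The Pauli matrix σ₂. -/
def sigma2 : Mat2 := !![0, -Complex.I; Complex.I, 0]
/-- The Pauli matrix σ₃. -/
def sigma3 : Mat2 := !![1, 0; 0, -1]

/-- ℝ³ with the Euclidean norm. -/
abbrev E3 := EuclideanSpace ℝ (Fin 3)

/-- For `v ∈ ℝ³`, `v·σ = v₁σ₁ + v₂σ₂ + v₃σ₃`. -/
def dotSigma (v : E3) : Mat2 := (v 0 : ℂ) • sigma1 + (v 1 : ℂ) • sigma2 + (v 2 : ℂ) • sigma3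

/-- `A^{α,a} = (1/2)(α·I + a·σ)`. -/
def Amat (α : ℝ) (a : E3) : Mat2 := (2 : ℂ)⁻¹ • ((α : ℂ) • (1 : Mat2) + dotSigma a)

/-- An operator is an effect if `0 ≤ A ≤ I` in the Loewner order. -/
def IsEffect (A : Mat2) : Prop := A.PosSemidef ∧ (1 - A).PosSemidef

/-- The Loewner order: `A ≤ B` iff `B - A` is positive semidefinite. -/
def loewnerLE (A B : Mat2) : Prop := (B - A).PosSemidef

/-- The simple (two-outcome) qubit observable `E^{α,a}`,
with `E^{α,a}(1) = A^{α,a}` and `E^{α,a}(0) = I - A^{α,a}`. -/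
def Eobs (α : ℝ) (a : E3) : Fin 2 → Mat2 := fun i => if i = 1 then Amat α a else 1 - Amat α a

/-- `G` is a joint observable of the two-outcome observables `E` and `F`. -/
def IsJointObs (G : Fin 2 → Fin 2 → Mat2) (E F : Fin 2 → Mat2) : Prop :=
  (∀ i j, (G i j).PosSemidef) ∧ (∑ i, ∑ j, G i j) = 1 ∧
    (∀ i, (∑ j, G i j) = E i) ∧ (∀ j, (∑ i, G i j) = F j)

/-- Joint measurability of two two-outcome observables. -/
def JointlyMeasurable2 (E F : Fin 2 → Mat2) : Prop := ∃ G, IsJointObs G E F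

/-- `G` is a joint observable of the three two-outcome observables `E`, `F` and `K`. -/
def IsJointObs3 (G : Fin 2 → Fin 2 → Fin 2 → Mat2) (E F K : Fin 2 → Mat2) : Prop :=
  (∀ i j k, (G i j k).PosSemidef) ∧ (∑ i, ∑ j, ∑ k, G i j k) = 1 ∧
    (∀ i, (∑ j, ∑ k, G i j k) = E i) ∧ (∀ j, (∑ i, ∑ k, G i j k) = F j) ∧
    (∀ k, (∑ i, ∑ j, G i j k) = K k)

/-- Joint measurability of three two-outcome observables. -/
def JointlyMeasurable3 (E F K : Fin 2 → Mat2) : Prop := ∃ G, IsJointObs3 G E F K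

/-- `n_{ij} = (1/2)((-1)^{i+1} a + (-1)^{j+1} b)`. -/
def nvec (a b : E3) (i j : Fin 2) : E3 :=
  (2 : ℝ)⁻¹ • ((-1 : ℝ) ^ ((i : ℕ) + 1) • a + (-1 : ℝ) ^ ((j : ℕ) + 1) • b)

/-- `G(i,j) = ‖n_{ij}‖ (1/2)(I + (n_{ij}/‖n_{ij}‖)·σ)`. -/
def Gab (a b : E3) : Fin 2 → Fin 2 → Mat2 := fun i j =>
  (‖nvec a b i j‖ : ℂ) •
    ((2 : ℂ)⁻¹ • ((1 : Mat2) + dotSigma (‖nvec a b i j‖⁻¹ • nvec a b i j)))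

/-!
Write every effect in Bloch form `Amat t g = (1/2)(t I + g·σ)`; its trace is `t` and its
determinant `(t² - ‖g‖²)/4`, so it is positive exactly when `‖g‖ ≤ t`. Through the margins, a
joint observable of `E^{1,a}` and `E^{1,b}` is determined by its `(1,1)` effect `Amat t g`, and
positivity of its four effects says `‖g‖, ‖a + b - g‖ ≤ t` and `‖a - g‖, ‖b - g‖ ≤ 1 - t`. The
triangle inequality then gives `‖a + b‖ ≤ 2t` and `‖a - b‖ ≤ 2(1 - t)`; on the boundary
`‖a + b‖ + ‖a - b‖ = 2` both are equalities, and strict convexity of the Euclidean norm forces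
`g = (a + b)/2` and `t = ‖a + b‖/2`, which is the family `Gab a b`.
-/

lemma dotSigma_add (v w : E3) : dotSigma (v + w) = dotSigma v + dotSigma w := by
  simp only [dotSigma, PiLp.add_apply, Complex.ofReal_add, add_smul]
  abel

lemma dotSigma_smul (c : ℝ) (v : E3) : dotSigma (c • v) = (c : ℂ) • dotSigma v := by
  simp only [dotSigma, PiLp.smul_apply, smul_eq_mul, Complex.ofReal_mul, smul_add, smul_smul]

lemma dotSigma_zero : dotSigma 0 = 0 := by
  simpa using dotSigma_smul 0 0

lemma trace_dotSigma (v : E3) : (dotSigma v).trace = 0 := by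
  simp [dotSigma, sigma1, sigma2, sigma3, Matrix.trace_fin_two]

lemma dotSigma_mul_self (v : E3) : dotSigma v * dotSigma v = ((‖v‖ ^ 2 : ℝ) : ℂ) • 1 := by
  rw [EuclideanSpace.norm_sq_eq, Fin.sum_univ_three]
  ext i j
  fin_cases i <;> fin_cases j <;>
    simp [dotSigma, sigma1, sigma2, sigma3, Matrix.mul_apply, Fin.sum_univ_two] <;> ring_nf <;>
    simp [Complex.I_sq]

lemma Amat_add (t s : ℝ) (v w : E3) : Amat t v + Amat s w = Amat (t + s) (v + w) := by
  simp only [Amat, dotSigma_add, Complex.ofReal_add, add_smul, ← smul_add]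
  abel_nf

lemma one_eq_Amat : (1 : Mat2) = Amat 2 0 := by
  simp [Amat, dotSigma_zero]

lemma Amat_zero_zero : Amat 0 0 = 0 := by
  simp [Amat, dotSigma_zero]

lemma Amat_zero_right (t : ℝ) : Amat t 0 = ((t / 2 : ℝ) : ℂ) • 1 := by
  simp only [Amat, dotSigma_zero, add_zero, smul_smul]
  push_cast
  ring_nf

lemma one_sub_Amat (v : E3) : 1 - Amat 1 v = Amat 1 (-v) := by
  rw [sub_eq_iff_eq_add, Amat_add, one_eq_Amat]
  norm_num

lemma trace_Amat (t : ℝ) (v : E3) : (Amat t v).trace = t := by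
  simp only [Amat, trace_smul, trace_add, trace_dotSigma, trace_one, Fintype.card_fin, smul_eq_mul]
  push_cast
  ring

lemma det_Amat (t : ℝ) (v : E3) : (Amat t v).det = (((t ^ 2 - ‖v‖ ^ 2) / 4 : ℝ) : ℂ) := by
  rw [EuclideanSpace.norm_sq_eq, Fin.sum_univ_three, Matrix.det_fin_two]
  simp [Amat, dotSigma, sigma1, sigma2, sigma3]
  ring_nf
  simp [Complex.I_sq]
  ring

lemma Amat_norm_mul_self (v : E3) : Amat ‖v‖ v * Amat ‖v‖ v = (‖v‖ : ℂ) • Amat ‖v‖ v := by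
  simp only [Amat, Matrix.smul_mul, Matrix.mul_smul, add_mul, mul_add, one_mul, mul_one,
    dotSigma_mul_self]
  push_cast
  module

lemma Amat_isHermitian (t : ℝ) (v : E3) : (Amat t v).IsHermitian := by
  refine Matrix.IsHermitian.ext fun i j => ?_
  fin_cases i <;> fin_cases j <;> simp [Amat, dotSigma, sigma1, sigma2, sigma3]

lemma posSemidef_Amat_norm (v : E3) : (Amat ‖v‖ v).PosSemidef := by
  rcases eq_or_ne v 0 with rfl | hv
  · rw [norm_zero, Amat_zero_zero]
    exact .zero
  -- `Amat ‖v‖ v` is `‖v‖` times a Hermitian projection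
  have hproj : Amat ‖v‖ v = ((‖v‖⁻¹ : ℝ) : ℂ) • ((Amat ‖v‖ v)ᴴ * Amat ‖v‖ v) := by
    rw [(Amat_isHermitian _ _).eq, Amat_norm_mul_self, smul_smul, ← Complex.ofReal_mul,
      inv_mul_cancel₀ (norm_ne_zero_iff.mpr hv), Complex.ofReal_one, one_smul]
  rw [hproj]
  exact (posSemidef_conjTranspose_mul_self _).smul (Complex.zero_le_real.mpr (by positivity))

theorem posSemidef_Amat_iff (t : ℝ) (v : E3) : (Amat t v).PosSemidef ↔ ‖v‖ ≤ t := by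
  constructor
  · intro h
    have ht : 0 ≤ t := by simpa [trace_Amat] using h.trace_nonneg
    have hdet := h.det_nonneg
    rw [det_Amat, Complex.zero_le_real] at hdet
    nlinarith [norm_nonneg v]
  · intro h
    have hsplit : Amat t v = Amat (t - ‖v‖) 0 + Amat ‖v‖ v := by
      rw [Amat_add]
      simp
    rw [hsplit, Amat_zero_right]
    refine .add (PosSemidef.one.smul ?_) (posSemidef_Amat_norm v)
    exact Complex.zero_le_real.mpr (by linarith)

theorem Matrix.IsHermitian.exists_eq_Amat {M : Mat2} (hM : M.IsHermitian) :
    ∃ t v, M = Amat t v := by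
  have h00 := hM.apply 0 0
  have h11 := hM.apply 1 1
  have h01 := hM.apply 1 0
  refine ⟨(M 0 0).re + (M 1 1).re,
    !₂[2 * (M 1 0).re, 2 * (M 1 0).im, (M 0 0).re - (M 1 1).re], ?_⟩
  ext i j
  fin_cases i <;> fin_cases j <;>
    simp [Complex.ext_iff, Amat, dotSigma, sigma1, sigma2, sigma3] at h00 h11 h01 ⊢ <;>
    grind

lemma eq_Amat_of_add_eq {M : Mat2} {t s : ℝ} {v w : E3} (h : M + Amat t v = Amat s w) :
    M = Amat (s - t) (w - v) := by
  rw [← add_left_inj (Amat t v), h, Amat_add, sub_add_cancel, sub_add_cancel]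

lemma Eobs_one_apply_one (v : E3) : Eobs 1 v 1 = Amat 1 v := rfl

lemma Eobs_one_apply_zero (v : E3) : Eobs 1 v 0 = Amat 1 (-v) := one_sub_Amat v

/-- The only family with margins `Eobs 1 a`, `Eobs 1 b` whose `(1,1)` effect is `Amat t g`. -/
def jointFamily (a b : E3) (t : ℝ) (g : E3) : Fin 2 → Fin 2 → Mat2 :=
  ![![Amat t (g - a - b), Amat (1 - t) (b - g)], ![Amat (1 - t) (a - g), Amat t g]]

theorem isJointObs_jointFamily_iff (a b : E3) (t : ℝ) (g : E3) :
    IsJointObs (jointFamily a b t g) (Eobs 1 a) (Eobs 1 b) ↔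
      ‖g - a - b‖ ≤ t ∧ ‖b - g‖ ≤ 1 - t ∧ ‖a - g‖ ≤ 1 - t ∧ ‖g‖ ≤ t := by
  have hmargins : (∑ i, ∑ j, jointFamily a b t g i j) = 1 ∧
      (∀ i, (∑ j, jointFamily a b t g i j) = Eobs 1 a i) ∧
      (∀ j, (∑ i, jointFamily a b t g i j) = Eobs 1 b j) := by
    simp only [jointFamily, Fin.sum_univ_two, Fin.forall_fin_two, Eobs_one_apply_one,
      Eobs_one_apply_zero, one_eq_Amat, Matrix.cons_val_zero, Matrix.cons_val_one, Amat_add]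
    refine ⟨?_, ⟨?_, ?_⟩, ?_, ?_⟩ <;> congr 1 <;> first | ring | abel
  unfold IsJointObs
  rw [and_iff_left hmargins]
  simp only [Fin.forall_fin_two, jointFamily, Matrix.cons_val_zero, Matrix.cons_val_one,
    posSemidef_Amat_iff, and_assoc]

theorem IsJointObs.exists_eq_jointFamily {a b : E3} {G : Fin 2 → Fin 2 → Mat2}
    (hG : IsJointObs G (Eobs 1 a) (Eobs 1 b)) : ∃ t g, G = jointFamily a b t g := by
  obtain ⟨hpos, -, hrow, hcol⟩ := hG
  obtain ⟨t, g, h11⟩ := (hpos 1 1).isHermitian.exists_eq_Amat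
  have hrow0 := hrow 0
  have hrow1 := hrow 1
  have hcol1 := hcol 1
  simp only [Fin.sum_univ_two, Eobs_one_apply_zero, Eobs_one_apply_one] at hrow0 hrow1 hcol1
  have h10 : G 1 0 = Amat (1 - t) (a - g) := eq_Amat_of_add_eq (h11 ▸ hrow1)
  have h01 : G 0 1 = Amat (1 - t) (b - g) := eq_Amat_of_add_eq (h11 ▸ hcol1)
  have h00 : G 0 0 = Amat t (g - a - b) := by
    rw [h01] at hrow0
    rw [eq_Amat_of_add_eq hrow0]
    congr 1 <;> [ring; abel]
  refine ⟨t, g, funext fun i => funext fun j => ?_⟩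
  fin_cases i <;> fin_cases j <;> simp [jointFamily, h00, h01, h10, h11]

lemma Gab_apply (a b : E3) (i j : Fin 2) : Gab a b i j = Amat ‖nvec a b i j‖ (nvec a b i j) := by
  rcases eq_or_ne (nvec a b i j) 0 with hv | hv
  · simp [Gab, Amat, hv, dotSigma_zero]
  simp only [Gab, Amat, dotSigma_smul, smul_add, smul_smul, Complex.ofReal_inv]
  field_simp

lemma nvec_eq (a b : E3) : nvec a b =
    ![![-((2 : ℝ)⁻¹ • (a + b)), -((2 : ℝ)⁻¹ • (a - b))],
      ![(2 : ℝ)⁻¹ • (a - b), (2 : ℝ)⁻¹ • (a + b)]] := by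
  funext i j
  fin_cases i <;> fin_cases j <;> simp [nvec] <;> module

lemma Gab_eq_jointFamily {a b : E3} (h : ‖a + b‖ + ‖a - b‖ = 2) :
    Gab a b = jointFamily a b (‖a + b‖ / 2) ((2 : ℝ)⁻¹ • (a + b)) := by
  funext i j
  rw [Gab_apply, nvec_eq]
  fin_cases i <;> fin_cases j <;>
    simp only [jointFamily, Fin.zero_eta, Fin.mk_one, Matrix.cons_val_zero, Matrix.cons_val_one] <;>
    congr 1
  all_goals first
    | module
    | simp only [norm_neg, norm_smul, norm_inv, Real.norm_ofNat]; linarith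

theorem norm_bounds_iff_eq_half_smul_add {V : Type*} [NormedAddCommGroup V] [NormedSpace ℝ V]
    [StrictConvexSpace ℝ V] {a b : V} (h : ‖a + b‖ + ‖a - b‖ = 2) (g : V) (t : ℝ) :
    (‖g - a - b‖ ≤ t ∧ ‖b - g‖ ≤ 1 - t ∧ ‖a - g‖ ≤ 1 - t ∧ ‖g‖ ≤ t) ↔
      g = (2 : ℝ)⁻¹ • (a + b) ∧ t = ‖a + b‖ / 2 := by
  constructor
  · rintro ⟨h00, h01, h10, h11⟩
    have hsum : a + b - g + g = a + b := sub_add_cancel _ _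
    have hplus : ‖a + b‖ ≤ ‖a + b - g‖ + ‖g‖ := by simpa using norm_add_le (a + b - g) g
    have hminus : ‖a - b‖ ≤ ‖a - g‖ + ‖b - g‖ := by simpa using norm_sub_le (a - g) (b - g)
    have hcomp : ‖a + b - g‖ = ‖g - a - b‖ := by rw [← norm_neg]; congr 1; abel
    -- both triangle inequalities are tight, and by strict convexity the first forces `a + b - g = g`
    have hmid : a + b - g = g :=
      eq_of_norm_eq_of_norm_add_eq (by linarith) (by rw [hsum]; linarith)
    exact ⟨by linear_combination (norm := module) (-(2 : ℝ)⁻¹) • hmid, by linarith⟩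
  · rintro ⟨rfl, rfl⟩
    have hnorm (v : V) : ‖(2 : ℝ)⁻¹ • v‖ = ‖v‖ / 2 := by
      rw [norm_smul, norm_inv, Real.norm_ofNat, inv_mul_eq_div]
    rw [show (2 : ℝ)⁻¹ • (a + b) - a - b = -((2 : ℝ)⁻¹ • (a + b)) by module,
      show b - (2 : ℝ)⁻¹ • (a + b) = -((2 : ℝ)⁻¹ • (a - b)) by module,
      show a - (2 : ℝ)⁻¹ • (a + b) = (2 : ℝ)⁻¹ • (a - b) by module]
    simp only [norm_neg, hnorm]
    refine ⟨?_, ?_, ?_, ?_⟩ <;> linarith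

theorem boundary_joint_unique_general (a b : E3)
    (h : ‖a + b‖ + ‖a - b‖ = 2) :
    IsJointObs (Gab a b) (Eobs 1 a) (Eobs 1 b) ∧
      ∀ G' : Fin 2 → Fin 2 → Mat2, IsJointObs G' (Eobs 1 a) (Eobs 1 b) → G' = Gab a b := by
  have hjoint (t : ℝ) (g : E3) : IsJointObs (jointFamily a b t g) (Eobs 1 a) (Eobs 1 b) ↔
      g = (2 : ℝ)⁻¹ • (a + b) ∧ t = ‖a + b‖ / 2 :=
    (isJointObs_jointFamily_iff a b t g).trans (norm_bounds_iff_eq_half_smul_add h g t)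
  rw [Gab_eq_jointFamily h]
  refine ⟨(hjoint _ _).2 ⟨rfl, rfl⟩, fun G' hG' => ?_⟩
  obtain ⟨t, g, rfl⟩ := hG'.exists_eq_jointFamily
  obtain ⟨rfl, rfl⟩ := (hjoint t g).1 hG'
  rfl

/-- on the boundary `‖a+b‖ + ‖a-b‖ = 2`, the family `Gab a b` is a joint
observable of `E^{1,a}` and `E^{1,b}`, and it is their unique joint observable. -/
theorem boundary_joint_unique (a b : E3) (hab : a ≠ b) (hab' : a ≠ -b)
    (h : ‖a + b‖ + ‖a - b‖ = 2) :
    IsJointObs (Gab a b) (Eobs 1 a) (Eobs 1 b) ∧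
      ∀ G' : Fin 2 → Fin 2 → Mat2, IsJointObs G' (Eobs 1 a) (Eobs 1 b) → G' = Gab a b :=
  boundary_joint_unique_general a b h
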